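/- arXiv:2201.05474 — 3 statements merged into one kernel-verified Lean document; each statement's English description precedes it below -/
import Mathlib

section
/- (Classical Rosenthal inequality, upper bound) Let 2 ≤ p < ∞ and let (g_n)_{n≥1} be a finite sequence of independent mean-zero random variables in L_p(Ω, ℙ) on a probability space. Then ‖Σ_n g_n‖_p ≤ C_p [ (Σ_n ‖g_n‖_2²)^{1/2} + (Σ_n ‖g_n‖_p^p)^{1/p} ] for a constant C_p depending only on p. -/
open MeasureTheory ProbabilityTheory ENNReal

/-!
Write `K = p² 3ᵖ`. The elementary inequality
`|a + b|ᵖ ≤ |a|ᵖ + p a |a|ᵖ⁻² b + K (|a|ᵖ⁻² b² + |b|ᵖ)` (a second-order Taylor bound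
when `|a| ≥ 2|b|`, a crude bound otherwise), integrated against independent `X`, `Y`
with `𝔼 Y = 0`, loses its first-order term, and Lyapunov's inequality turns `𝔼|X|ᵖ⁻²`
into `(𝔼|X|ᵖ)^(1 - 2/p)`. Adding the `gₙ` one at a time, the largest `p`-th moment `R`
of a partial sum satisfies the self-bounding inequality `R ≤ K (R^(1 - 2/p) A + B)` with
`A = ∑ ‖gₙ‖₂²` and `B = ∑ ‖gₙ‖ₚᵖ`, which forces `R^(1/p) ≤ 2K (A^(1/2) + B^(1/p))`.
-/

theorem abs_sub_sub_deriv_mul_le {f f' f'' : ℝ → ℝ} {x y C : ℝ}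
    (hf : ∀ u ∈ Set.uIcc x y, HasDerivWithinAt f (f' u) (Set.uIcc x y) u)
    (hf' : ∀ u ∈ Set.uIcc x y, HasDerivWithinAt f' (f'' u) (Set.uIcc x y) u)
    (hC : ∀ u ∈ Set.uIcc x y, |f'' u| ≤ C) :
    |f y - f x - f' x * (y - x)| ≤ C * (y - x) ^ 2 := by
  have hx : x ∈ Set.uIcc x y := Set.left_mem_uIcc
  have hy : y ∈ Set.uIcc x y := Set.right_mem_uIcc
  have hC0 : 0 ≤ C := (abs_nonneg _).trans (hC x hx)
  have hf'_lip : ∀ u ∈ Set.uIcc x y, ‖f' u - f' x‖ ≤ C * |y - x| := fun u hu =>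
    ((convex_uIcc x y).norm_image_sub_le_of_norm_hasDerivWithin_le hf' hC hx hu).trans
      (mul_le_mul_of_nonneg_left (Set.abs_sub_left_of_mem_uIcc hu) hC0)
  have key := (convex_uIcc x y).norm_image_sub_le_of_norm_hasDerivWithin_le
    (f := fun u => f u - f' x * u)
    (fun u hu => (hf u hu).sub ((hasDerivWithinAt_id u _).const_mul (f' x)))
    (by simpa only [mul_one] using hf'_lip) hx hy
  rw [Real.norm_eq_abs, Real.norm_eq_abs, mul_assoc, abs_mul_abs_self, ← sq] at key
  convert key using 2
  ring

theorem rpow_add_le_of_two_mul_abs_le {p a b : ℝ} (hp : 2 ≤ p) (ha : 0 < a) (hb : 2 * |b| ≤ a) :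
    (a + b) ^ p ≤ a ^ p + p * a ^ (p - 1) * b
      + p * (p - 1) * 2 ^ (p - 2) * a ^ (p - 2) * b ^ 2 := by
  have hpos : ∀ u ∈ Set.uIcc a (a + b), 0 < u ∧ u ≤ 2 * a := fun u hu => by
    have := Set.abs_sub_left_of_mem_uIcc hu
    rw [add_sub_cancel_left] at this
    constructor <;> linarith [abs_le.1 this]
  have key := abs_sub_sub_deriv_mul_le (f := fun u => u ^ p) (f' := fun u => p * u ^ (p - 1))
    (f'' := fun u => p * ((p - 1) * u ^ (p - 1 - 1)))
    (C := p * (p - 1) * 2 ^ (p - 2) * a ^ (p - 2))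
    (fun u hu => (Real.hasDerivAt_rpow_const (Or.inl (hpos u hu).1.ne')).hasDerivWithinAt)
    (fun u hu =>
      ((Real.hasDerivAt_rpow_const (Or.inl (hpos u hu).1.ne')).const_mul p).hasDerivWithinAt)
    (fun u hu => by
      obtain ⟨hu0, hu2a⟩ := hpos u hu
      have hpp : 0 ≤ p * (p - 1) := by nlinarith
      have hup : u ^ (p - 2) ≤ 2 ^ (p - 2) * a ^ (p - 2) := by
        rw [← Real.mul_rpow zero_le_two ha.le]
        exact Real.rpow_le_rpow hu0.le hu2a (by linarith)
      rw [show p - 1 - 1 = p - 2 by ring, ← mul_assoc,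
        abs_of_nonneg (mul_nonneg hpp (Real.rpow_nonneg hu0.le _)), mul_assoc _ (2 ^ _)]
      exact mul_le_mul_of_nonneg_left hup hpp)
  simp only [add_sub_cancel_left] at key
  linarith [(abs_le.1 key).2]

theorem abs_add_rpow_le_of_two_mul_abs_le {p a b : ℝ} (hp : 2 ≤ p) (h : 2 * |b| ≤ |a|) :
    |a + b| ^ p ≤ |a| ^ p + p * (a * |a| ^ (p - 2)) * b
      + p * (p - 1) * 2 ^ (p - 2) * (|a| ^ (p - 2) * b ^ 2) := by
  wlog ha : 0 ≤ a generalizing a b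
  · have := this (a := -a) (b := -b) (by rwa [abs_neg, abs_neg]) (by linarith)
    rw [← neg_add, abs_neg, abs_neg, neg_sq] at this
    linarith
  rcases ha.eq_or_lt with rfl | ha
  · obtain rfl : b = 0 := abs_nonpos_iff.1 (by rw [abs_zero] at h; linarith)
    simp
  rw [abs_of_pos ha] at h ⊢
  rw [abs_of_pos (by linarith [neg_abs_le b] : 0 < a + b)]
  have := rpow_add_le_of_two_mul_abs_le hp ha h
  rw [show p - 1 = p - 2 + 1 by ring, Real.rpow_add_one' ha.le (by linarith)] at this
  linarith

theorem abs_add_rpow_le_of_abs_lt_two_mul_abs {p a b : ℝ} (hp : 2 ≤ p) (h : |a| < 2 * |b|) :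
    |a + b| ^ p ≤ |a| ^ p + p * (a * |a| ^ (p - 2)) * b + (3 ^ p + p * 2 ^ (p - 1)) * |b| ^ p := by
  have hsum : |a + b| ^ p ≤ 3 ^ p * |b| ^ p := by
    rw [← Real.mul_rpow zero_le_three (abs_nonneg b)]
    exact Real.rpow_le_rpow (abs_nonneg _) (by linarith [abs_add_le a b]) (by linarith)
  have hlin : |p * (a * |a| ^ (p - 2)) * b| ≤ p * 2 ^ (p - 1) * |b| ^ p := by
    have ha : |a| ^ (p - 1) ≤ 2 ^ (p - 1) * |b| ^ (p - 1) := by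
      rw [← Real.mul_rpow zero_le_two (abs_nonneg b)]
      exact Real.rpow_le_rpow (abs_nonneg a) h.le (by linarith)
    calc |p * (a * |a| ^ (p - 2)) * b| = p * (|a| ^ (p - 1) * |b|) := by
          rw [abs_mul, abs_mul, abs_mul, abs_of_nonneg (by linarith : 0 ≤ p),
            abs_of_nonneg (Real.rpow_nonneg (abs_nonneg a) _), mul_comm |a|,
            ← Real.rpow_add_one' (abs_nonneg a) (by linarith), mul_assoc]
          ring_nf
      _ ≤ p * (2 ^ (p - 1) * |b| ^ (p - 1) * |b|) := by gcongr
      _ = p * 2 ^ (p - 1) * |b| ^ p := by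
          rw [mul_assoc _ _ |b|, ← Real.rpow_add_one' (abs_nonneg b) (by linarith), sub_add_cancel]
          ring
  have := Real.rpow_nonneg (abs_nonneg a) p
  linarith [neg_abs_le (p * (a * |a| ^ (p - 2)) * b)]

theorem abs_add_rpow_le {p : ℝ} (hp : 2 ≤ p) (a b : ℝ) :
    |a + b| ^ p ≤ |a| ^ p + p * (a * |a| ^ (p - 2)) * b
      + p ^ 2 * 3 ^ p * (|a| ^ (p - 2) * b ^ 2 + |b| ^ p) := by
  have h3 : ∀ q ≤ p, (2 : ℝ) ^ q ≤ 3 ^ p := fun q hq =>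
    (Real.rpow_le_rpow_of_exponent_le one_le_two hq).trans
      (Real.rpow_le_rpow zero_le_two (by norm_num) (by linarith))
  have hA := mul_nonneg (Real.rpow_nonneg (abs_nonneg a) (p - 2)) (sq_nonneg b)
  have hB := Real.rpow_nonneg (abs_nonneg b) p
  have hK0 : 0 ≤ p ^ 2 * 3 ^ p := by positivity
  rcases le_or_gt (2 * |b|) |a| with h | h
  · have hK : p * (p - 1) * 2 ^ (p - 2) ≤ p ^ 2 * 3 ^ p := by
      have := h3 (p - 2) (by linarith)
      have := Real.rpow_nonneg zero_le_two (p - 2)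
      nlinarith
    linarith [abs_add_rpow_le_of_two_mul_abs_le hp h, mul_le_mul_of_nonneg_right hK hA,
      mul_nonneg hK0 hB]
  · have hK : 3 ^ p + p * 2 ^ (p - 1) ≤ p ^ 2 * 3 ^ p := by
      have := mul_le_mul_of_nonneg_left (h3 (p - 1) (by linarith)) (by linarith : 0 ≤ p)
      have := mul_nonneg (by nlinarith : 0 ≤ p ^ 2 - 1 - p) (Real.rpow_nonneg zero_le_three p)
      nlinarith
    linarith [abs_add_rpow_le_of_abs_lt_two_mul_abs hp h, mul_le_mul_of_nonneg_right hK hB,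
      mul_nonneg hK0 hA]

theorem rpow_one_div_le_of_le_mul {p K R A B : ℝ} (hp : 2 ≤ p) (hK : 1 ≤ K) (hA : 0 ≤ A)
    (hB : 0 ≤ B) (hR : 0 ≤ R) (h : R ≤ K * (R ^ ((p - 2) / p) * A + B)) :
    R ^ (1 / p) ≤ 2 * K * (A ^ (1 / 2 : ℝ) + B ^ (1 / p)) := by
  have hp0 : 0 < p := by linarith
  have h2K : 1 ≤ 2 * K := by linarith
  have hroot : ∀ {q C : ℝ}, 0 ≤ C → 0 < q → q ≤ 1 → (2 * K * C) ^ q ≤ 2 * K * C ^ q :=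
    fun hC hq hq1 => by
      rw [Real.mul_rpow (by linarith) hC]
      gcongr
      exact Real.rpow_le_self_of_one_le h2K hq1
  have hA' := Real.rpow_nonneg hA (1 / 2 : ℝ)
  have hB' := Real.rpow_nonneg hB (1 / p)
  rcases le_or_gt R (2 * K * B) with hRB | hRB
  · calc R ^ (1 / p) ≤ (2 * K * B) ^ (1 / p) := by gcongr
      _ ≤ 2 * K * B ^ (1 / p) :=
          hroot hB (by positivity) ((div_le_one hp0).2 (by linarith))
      _ ≤ _ := by nlinarith
  · -- here `R` is dominated by its own power `R ^ (1 - 2 / p)`, which pins down `R ^ (2 / p)`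
    have hRpos : 0 < R := by
      by_contra! h0
      nlinarith
    have hsplit : R = R ^ ((p - 2) / p) * R ^ (2 / p) := by
      rw [← Real.rpow_add hRpos, ← add_div, sub_add_cancel, div_self hp0.ne', Real.rpow_one]
    have h2 : R ^ (2 / p) ≤ 2 * K * A := by
      refine le_of_mul_le_mul_left ?_ (Real.rpow_pos_of_pos hRpos ((p - 2) / p))
      nlinarith
    calc R ^ (1 / p) = (R ^ (2 / p)) ^ (1 / 2 : ℝ) := by
          rw [← Real.rpow_mul hR]; congr 1; field_simp
      _ ≤ (2 * K * A) ^ (1 / 2 : ℝ) := by gcongr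
      _ ≤ 2 * K * A ^ (1 / 2 : ℝ) := hroot hA (by norm_num) (by norm_num)
      _ ≤ _ := by nlinarith

section Moments

variable {Ω : Type*} [MeasurableSpace Ω] {P : Measure Ω}

theorem MeasureTheory.MemLp.toReal_eLpNorm_ofReal {f : Ω → ℝ} {q : ℝ} (hq : 0 < q)
    (hf : MemLp f (ENNReal.ofReal q) P) :
    (eLpNorm f (ENNReal.ofReal q) P).toReal = (∫ ω, |f ω| ^ q ∂P) ^ (1 / q) := by
  rw [hf.eLpNorm_eq_integral_rpow_norm (by simpa using hq) ofReal_ne_top,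
    ENNReal.toReal_ofReal (by positivity), ENNReal.toReal_ofReal hq.le, one_div]
  simp only [Real.norm_eq_abs]

theorem MeasureTheory.MemLp.toReal_eLpNorm_ofReal_rpow {f : Ω → ℝ} {q : ℝ} (hq : 0 < q)
    (hf : MemLp f (ENNReal.ofReal q) P) :
    (eLpNorm f (ENNReal.ofReal q) P).toReal ^ q = ∫ ω, |f ω| ^ q ∂P := by
  rw [hf.toReal_eLpNorm_ofReal hq, one_div,
    Real.rpow_inv_rpow (integral_nonneg fun ω => by positivity) hq.ne']

theorem MeasureTheory.MemLp.integrable_abs_rpow [IsFiniteMeasure P] {f : Ω → ℝ} {p q : ℝ}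
    (hf : MemLp f (ENNReal.ofReal p) P) (hq : 0 ≤ q) (hqp : q ≤ p) :
    Integrable (fun ω => |f ω| ^ q) P := by
  simpa [ENNReal.toReal_ofReal hq] using
    (hf.mono_exponent (ENNReal.ofReal_le_ofReal hqp)).integrable_norm_rpow'

theorem MeasureTheory.MemLp.integrable_mul_abs_rpow [IsFiniteMeasure P] {f : Ω → ℝ} {p q : ℝ}
    (hf : MemLp f (ENNReal.ofReal p) P) (hq : 0 ≤ q) (hqp : q + 1 ≤ p) :
    Integrable (fun ω => f ω * |f ω| ^ q) P := by
  refine (hf.integrable_abs_rpow (by linarith) hqp).mono'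
    ((continuous_id.mul (continuous_abs.rpow_const fun _ => Or.inr hq)).comp_aestronglyMeasurable
      hf.1) (ae_of_all _ fun ω => le_of_eq ?_)
  rw [Real.norm_eq_abs, abs_mul, abs_of_nonneg (Real.rpow_nonneg (abs_nonneg _) _), mul_comm,
    Real.rpow_add_one' (abs_nonneg _) (by linarith)]

theorem integral_rpow_le_rpow_integral [IsProbabilityMeasure P] {Z : Ω → ℝ} {r : ℝ}
    (hr₀ : 0 ≤ r) (hr₁ : r ≤ 1) (hZ₀ : 0 ≤ᵐ[P] Z) (hZ : Integrable Z P)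
    (hZr : Integrable (fun ω => Z ω ^ r) P) :
    ∫ ω, Z ω ^ r ∂P ≤ (∫ ω, Z ω ∂P) ^ r :=
  (Real.concaveOn_rpow hr₀ hr₁).le_map_integral
    (continuous_id.rpow_const fun _ => Or.inr hr₀).continuousOn isClosed_Ici hZ₀ hZ hZr

theorem MeasureTheory.MemLp.integral_abs_rpow_le [IsProbabilityMeasure P] {f : Ω → ℝ} {p q : ℝ}
    (hf : MemLp f (ENNReal.ofReal p) P) (hq : 0 ≤ q) (hqp : q ≤ p) :
    ∫ ω, |f ω| ^ q ∂P ≤ (∫ ω, |f ω| ^ p ∂P) ^ (q / p) := by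
  rcases (hq.trans hqp).eq_or_lt with hp | hp
  · obtain rfl : q = 0 := le_antisymm (hp ▸ hqp) hq
    simp
  have hpow : (fun ω => (|f ω| ^ p) ^ (q / p)) = fun ω => |f ω| ^ q := funext fun ω => by
    rw [← Real.rpow_mul (abs_nonneg _), mul_div_cancel₀ _ hp.ne']
  have := integral_rpow_le_rpow_integral (div_nonneg hq hp.le) ((div_le_one hp).2 hqp)
    (ae_of_all _ fun ω => by positivity) (hf.integrable_abs_rpow hp.le le_rfl)
    (hpow ▸ hf.integrable_abs_rpow hq hqp)
  rwa [hpow] at this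

end Moments

section Step

variable {Ω : Type*} [MeasurableSpace Ω] {P : Measure Ω} [IsProbabilityMeasure P]

theorem integral_abs_add_rpow_le {p : ℝ} (hp : 2 ≤ p) {X Y : Ω → ℝ}
    (hX : MemLp X (ENNReal.ofReal p) P) (hY : MemLp Y (ENNReal.ofReal p) P)
    (hXY : IndepFun X Y P) (hY₀ : ∫ ω, Y ω ∂P = 0) :
    ∫ ω, |X ω + Y ω| ^ p ∂P ≤ ∫ ω, |X ω| ^ p ∂P + p ^ 2 * 3 ^ p *
      ((∫ ω, |X ω| ^ p ∂P) ^ ((p - 2) / p) * ∫ ω, |Y ω| ^ (2 : ℝ) ∂P + ∫ ω, |Y ω| ^ p ∂P) := by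
  have hψ : Measurable fun x : ℝ => |x| ^ (p - 2) :=
    (continuous_abs.rpow_const fun _ => Or.inr (by linarith)).measurable
  have IXp := hX.integrable_abs_rpow (by linarith) le_rfl
  have IYp := hY.integrable_abs_rpow (by linarith) le_rfl
  have IY2 := hY.integrable_abs_rpow zero_le_two hp
  have IXψ := hX.integrable_abs_rpow (by linarith : 0 ≤ p - 2) (by linarith)
  have IXφ := hX.integrable_mul_abs_rpow (by linarith : 0 ≤ p - 2) (by linarith)
  have IY : Integrable Y P :=
    hY.integrable (by simpa using ENNReal.ofReal_le_ofReal (by linarith : 1 ≤ p))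
  have hφY : IndepFun (fun ω => X ω * |X ω| ^ (p - 2)) Y P :=
    hXY.comp (measurable_id.mul hψ) measurable_id
  have hψY : IndepFun (fun ω => |X ω| ^ (p - 2)) (fun ω => |Y ω| ^ (2 : ℝ)) P :=
    hXY.comp hψ (continuous_abs.rpow_const fun _ => Or.inr zero_le_two).measurable
  have hfirst : ∫ ω, X ω * |X ω| ^ (p - 2) * Y ω ∂P = 0 :=
    (hφY.integral_fun_mul_eq_mul_integral IXφ.1 IY.1).trans (by rw [hY₀, mul_zero])
  have hsecond : ∫ ω, |X ω| ^ (p - 2) * |Y ω| ^ (2 : ℝ) ∂P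
      = (∫ ω, |X ω| ^ (p - 2) ∂P) * ∫ ω, |Y ω| ^ (2 : ℝ) ∂P :=
    hψY.integral_fun_mul_eq_mul_integral IXψ.1 IY2.1
  have IP1 : Integrable (fun ω => X ω * |X ω| ^ (p - 2) * Y ω) P := hφY.integrable_mul IXφ IY
  have IP2 : Integrable (fun ω => |X ω| ^ (p - 2) * |Y ω| ^ (2 : ℝ)) P :=
    hψY.integrable_mul IXψ IY2
  have I1 : Integrable (fun ω => |X ω| ^ p + p * (X ω * |X ω| ^ (p - 2) * Y ω)) P :=
    IXp.add (IP1.const_mul p)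
  have I2 : Integrable (fun ω =>
      p ^ 2 * 3 ^ p * (|X ω| ^ (p - 2) * |Y ω| ^ (2 : ℝ) + |Y ω| ^ p)) P :=
    (IP2.add IYp).const_mul _
  calc ∫ ω, |X ω + Y ω| ^ p ∂P
      ≤ ∫ ω, (|X ω| ^ p + p * (X ω * |X ω| ^ (p - 2) * Y ω)
          + p ^ 2 * 3 ^ p * (|X ω| ^ (p - 2) * |Y ω| ^ (2 : ℝ) + |Y ω| ^ p)) ∂P := by
        refine integral_mono_of_nonneg (ae_of_all _ fun ω => by positivity) (I1.add I2)
          (ae_of_all _ fun ω => ?_)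
        have := abs_add_rpow_le hp (X ω) (Y ω)
        simp only [Real.rpow_two, sq_abs]
        linarith
    _ = ∫ ω, |X ω| ^ p ∂P + p ^ 2 * 3 ^ p *
          ((∫ ω, |X ω| ^ (p - 2) ∂P) * ∫ ω, |Y ω| ^ (2 : ℝ) ∂P + ∫ ω, |Y ω| ^ p ∂P) := by
        rw [integral_add I1 I2, integral_add IXp (IP1.const_mul p), integral_const_mul,
          integral_const_mul, integral_add IP2 IYp,
          hfirst, hsecond, mul_zero, add_zero]
    _ ≤ _ := by gcongr; exact hX.integral_abs_rpow_le (by linarith) (by linarith)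

end Step

section Sums

variable {Ω : Type*} [MeasurableSpace Ω] {P : Measure Ω} [IsProbabilityMeasure P]
  {ι : Type*} {p : ℝ} {g : ι → Ω → ℝ}

theorem integral_abs_sum_rpow_le (hp : 2 ≤ p) (hind : iIndepFun g P)
    (hmem : ∀ i, MemLp (g i) (ENNReal.ofReal p) P) (hzero : ∀ i, ∫ ω, g i ω ∂P = 0) {R : ℝ}
    (hR : ∀ s : Finset ι, ∫ ω, |∑ i ∈ s, g i ω| ^ p ∂P ≤ R) (s : Finset ι) :
    ∫ ω, |∑ i ∈ s, g i ω| ^ p ∂P ≤ p ^ 2 * 3 ^ p *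
      (R ^ ((p - 2) / p) * ∑ i ∈ s, ∫ ω, |g i ω| ^ (2 : ℝ) ∂P + ∑ i ∈ s, ∫ ω, |g i ω| ^ p ∂P) := by
  classical
  induction s using Finset.induction_on with
  | empty => simp [Real.zero_rpow (by linarith : p ≠ 0)]
  | insert a s ha ih =>
    have hXY : IndepFun (fun ω => ∑ i ∈ s, g i ω) (g a) P := by
      simpa only [Finset.sum_fn] using
        hind.indepFun_finsetSum_of_notMem₀ (fun i => (hmem i).1.aemeasurable) ha
    have hstep := integral_abs_add_rpow_le hp (memLp_finsetSum s fun i _ => hmem i) (hmem a)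
      hXY (hzero a)
    have hpow : (∫ ω, |∑ i ∈ s, g i ω| ^ p ∂P) ^ ((p - 2) / p) ≤ R ^ ((p - 2) / p) := by
      have : 0 ≤ ∫ ω, |∑ i ∈ s, g i ω| ^ p ∂P := integral_nonneg fun ω => by positivity
      gcongr
      exact hR s
    have hK : 0 ≤ p ^ 2 * 3 ^ p := by positivity
    have hA : 0 ≤ ∫ ω, |g a ω| ^ (2 : ℝ) ∂P := integral_nonneg fun ω => by positivity
    have := mul_le_mul_of_nonneg_left (mul_le_mul_of_nonneg_right hpow hA) hK
    simp_rw [Finset.sum_insert ha, add_comm (g a _)]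
    linarith

theorem rpow_integral_abs_sum_le [Fintype ι] (hp : 2 ≤ p) (hind : iIndepFun g P)
    (hmem : ∀ i, MemLp (g i) (ENNReal.ofReal p) P) (hzero : ∀ i, ∫ ω, g i ω ∂P = 0) :
    (∫ ω, |∑ i, g i ω| ^ p ∂P) ^ (1 / p) ≤ 2 * (p ^ 2 * 3 ^ p) *
      ((∑ i, ∫ ω, |g i ω| ^ (2 : ℝ) ∂P) ^ (1 / 2 : ℝ)
        + (∑ i, ∫ ω, |g i ω| ^ p ∂P) ^ (1 / p)) := by
  set I : Finset ι → ℝ := fun s => ∫ ω, |∑ i ∈ s, g i ω| ^ p ∂P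
  obtain ⟨s₀, -, hs₀⟩ := Finset.exists_max_image Finset.univ I Finset.univ_nonempty
  have hI : ∀ s, 0 ≤ I s := fun s => integral_nonneg fun ω => by positivity
  have hK : 1 ≤ p ^ 2 * 3 ^ p := one_le_mul_of_one_le_of_one_le (by nlinarith)
    (Real.one_le_rpow (by norm_num) (by linarith))
  have hrec : I s₀ ≤ p ^ 2 * 3 ^ p * (I s₀ ^ ((p - 2) / p) * ∑ i, ∫ ω, |g i ω| ^ (2 : ℝ) ∂P
      + ∑ i, ∫ ω, |g i ω| ^ p ∂P) := by
    refine (integral_abs_sum_rpow_le hp hind hmem hzero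
      (fun s => hs₀ s (Finset.mem_univ s)) s₀).trans ?_
    gcongr <;> exact Finset.subset_univ s₀
  calc (∫ ω, |∑ i, g i ω| ^ p ∂P) ^ (1 / p) ≤ I s₀ ^ (1 / p) := by
        simpa using Real.rpow_le_rpow (hI Finset.univ) (hs₀ Finset.univ (Finset.mem_univ _))
          (by positivity : 0 ≤ 1 / p)
    _ ≤ _ := rpow_one_div_le_of_le_mul hp hK
        (Finset.sum_nonneg fun i _ => integral_nonneg fun ω => by positivity)
        (Finset.sum_nonneg fun i _ => integral_nonneg fun ω => by positivity) (hI s₀) hrec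

end Sums

/-- Classical Rosenthal inequality, upper bound: for `2 ≤ p < ∞` there is a constant
`C_p` depending only on `p` such that for every finite sequence of independent
mean-zero random variables `(g_n)` in `L_p` on a probability space,
`‖Σ_n g_n‖_p ≤ C_p [ (Σ_n ‖g_n‖_2²)^{1/2} + (Σ_n ‖g_n‖_p^p)^{1/p} ]`. -/
theorem rosenthal_upper (p : ℝ) (hp : 2 ≤ p) :
    ∃ C : ℝ, 0 < C ∧
      ∀ (Ω : Type) (_ : MeasurableSpace Ω) (P : Measure Ω), IsProbabilityMeasure P →
      ∀ (N : ℕ) (g : Fin N → Ω → ℝ),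
        iIndepFun g P →
        (∀ n, MemLp (g n) (ENNReal.ofReal p) P) →
        (∀ n, ∫ ω, g n ω ∂P = 0) →
        (eLpNorm (fun ω => ∑ n, g n ω) (ENNReal.ofReal p) P).toReal ≤
          C * ((∑ n, ((eLpNorm (g n) 2 P).toReal) ^ (2:ℝ)) ^ ((1:ℝ)/2) +
               (∑ n, ((eLpNorm (g n) (ENNReal.ofReal p) P).toReal) ^ p) ^ (1/p)) := by
  refine ⟨2 * (p ^ 2 * 3 ^ p), by positivity, ?_⟩
  intro Ω _ P _ N g hind hmem hzero
  have hp0 : 0 < p := by linarith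
  have hL2 : ∀ n, (eLpNorm (g n) 2 P).toReal ^ (2 : ℝ) = ∫ ω, |g n ω| ^ (2 : ℝ) ∂P := fun n => by
    simpa using ((hmem n).mono_exponent (ENNReal.ofReal_le_ofReal hp)).toReal_eLpNorm_ofReal_rpow
      two_pos
  simp only [hL2, fun n => (hmem n).toReal_eLpNorm_ofReal_rpow hp0,
    (memLp_finsetSum Finset.univ fun n _ => hmem n).toReal_eLpNorm_ofReal hp0]
  exact rpow_integral_abs_sum_le hp hind hmem hzero
end

section
/- (Classical Rosenthal inequality, lower bound) Let 2 ≤ p < ∞ and let (g_n)_{n≥1} be a finite sequence of independent mean-zero random variables in L_p(Ω, ℙ). Then (Σ_n ‖g_n‖_2²)^{1/2} + (Σ_n ‖g_n‖_p^p)^{1/p} ≤ c_p ‖Σ_n g_n‖_p for a constant c_p depending only on p. -/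
/-! For `p ≥ 2` and real `a, t` one has the one-sided Taylor estimate
`|a + t|^p ≥ |a|^p + p |a|^(p-2) a t + 2^(2-p) |t|^p`. Differentiating in `t`, it reduces to
`ψ(a + t) - ψ(a) ≥ 2^(2-p) t^(p-1)` for `t ≥ 0`, where `ψ x = |x|^(p-2) x`; this follows from
super-additivity of `x ↦ x^(p-1)` on `[0, ∞)` when `a` and `a + t` have the same sign, and from
the power-mean inequality when they do not.

Taking `a = X`, `t = Y` with `Y` centred and independent of `X`, the linear term has expectation
`E[ψ(X)] E[Y] = 0`, so `E|X + Y|^p ≥ E|X|^p + 2^(2-p) E|Y|^p`, and by induction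
`Σ E|g_n|^p ≤ 2^(p-2) E|Σ g_n|^p`. Hence the `ℓ^p` term is at most `2 ‖Σ g_n‖_p`; the case `p = 2`
bounds the `ℓ^2` term by `2 ‖Σ g_n‖_2 ≤ 2 ‖Σ g_n‖_p`, so `c_p = 4` works. -/

open MeasureTheory ProbabilityTheory ENNReal

namespace Real

lemma rpow_add_le_mul_rpow_add_rpow {p a b : ℝ} (ha : 0 ≤ a) (hb : 0 ≤ b) (hp : 1 ≤ p) :
    (a + b) ^ p ≤ 2 ^ (p - 1) * (a ^ p + b ^ p) := by
  lift a to NNReal using ha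
  lift b to NNReal using hb
  exact_mod_cast NNReal.rpow_add_le_mul_rpow_add_rpow a b hp

lemma abs_rpow_sub_two_mul_self_of_nonneg {p x : ℝ} (hp : p ≠ 1) (hx : 0 ≤ x) :
    |x| ^ (p - 2) * x = x ^ (p - 1) := by
  rw [abs_of_nonneg hx, ← rpow_add_one' hx (by contrapose! hp; linarith)]
  ring_nf

lemma abs_rpow_sub_two_mul_self_of_nonpos {p x : ℝ} (hp : p ≠ 1) (hx : x ≤ 0) :
    |x| ^ (p - 2) * x = -(-x) ^ (p - 1) := by
  rw [← abs_neg, ← abs_rpow_sub_two_mul_self_of_nonneg hp (neg_nonneg.2 hx)]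
  ring

lemma two_rpow_mul_rpow_le_abs_rpow_sub_two_mul_sub {p a t : ℝ} (hp : 2 ≤ p) (ht : 0 ≤ t) :
    2 ^ (2 - p) * t ^ (p - 1) ≤ |a + t| ^ (p - 2) * (a + t) - |a| ^ (p - 2) * a := by
  have hp1 : p ≠ 1 := by linarith
  have hq : 1 ≤ p - 1 := by linarith
  have htq : 2 ^ (2 - p) * t ^ (p - 1) ≤ t ^ (p - 1) :=
    mul_le_of_le_one_left (rpow_nonneg ht _)
      (rpow_le_one_of_one_le_of_nonpos one_le_two (by linarith))
  rcases le_total 0 a with ha | ha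
  · rw [abs_rpow_sub_two_mul_self_of_nonneg hp1 ha,
      abs_rpow_sub_two_mul_self_of_nonneg hp1 (by linarith)]
    linarith [add_rpow_le_rpow_add ha ht hq]
  rcases le_total 0 (a + t) with hat | hat
  · rw [abs_rpow_sub_two_mul_self_of_nonpos hp1 ha, abs_rpow_sub_two_mul_self_of_nonneg hp1 hat]
    have hmean := rpow_add_le_mul_rpow_add_rpow hat (neg_nonneg.2 ha) hq
    have hinv : (2 : ℝ) ^ (2 - p) * 2 ^ (p - 1 - 1) = 1 := by
      rw [← rpow_add two_pos, show 2 - p + (p - 1 - 1) = 0 by ring, rpow_zero]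
    calc 2 ^ (2 - p) * t ^ (p - 1)
        = 2 ^ (2 - p) * (a + t + -a) ^ (p - 1) := by ring_nf
      _ ≤ 2 ^ (2 - p) * (2 ^ (p - 1 - 1) * ((a + t) ^ (p - 1) + (-a) ^ (p - 1))) := by gcongr
      _ = (a + t) ^ (p - 1) - -(-a) ^ (p - 1) := by rw [← mul_assoc, hinv]; ring
  · rw [abs_rpow_sub_two_mul_self_of_nonpos hp1 ha, abs_rpow_sub_two_mul_self_of_nonpos hp1 hat]
    have := add_rpow_le_rpow_add (neg_nonneg.2 hat) ht hq
    rw [show -(a + t) + t = -a by ring] at this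
    linarith

lemma abs_rpow_add_mul_add_le_abs_add_rpow_of_nonneg {p a t : ℝ} (hp : 2 ≤ p) (ht : 0 ≤ t) :
    |a| ^ p + p * (|a| ^ (p - 2) * a) * t + 2 ^ (2 - p) * |t| ^ p ≤ |a + t| ^ p := by
  have hp1 : 1 < p := by linarith
  set f : ℝ → ℝ := fun s ↦
    |a + s| ^ p - (|a| ^ p + p * (|a| ^ (p - 2) * a) * s + 2 ^ (2 - p) * |s| ^ p)
  have hf : ∀ s, HasDerivAt f (p * |a + s| ^ (p - 2) * (a + s) -
      (p * (|a| ^ (p - 2) * a) + 2 ^ (2 - p) * (p * |s| ^ (p - 2) * s))) s := fun s ↦ by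
    refine (((hasDerivAt_abs_rpow (a + s) hp1).comp_const_add a s).sub
      ((((hasDerivAt_id s).const_mul _).const_add _).add
        ((hasDerivAt_abs_rpow s hp1).const_mul _))).congr_deriv ?_
    ring
  have hmono : MonotoneOn f (Set.Ici 0) := by
    refine monotoneOn_of_hasDerivWithinAt_nonneg (convex_Ici 0)
      (continuous_iff_continuousAt.2 fun s ↦ (hf s).continuousAt).continuousOn
      (fun s _ ↦ (hf s).hasDerivWithinAt) ?_
    intro s hs
    rw [interior_Ici] at hs
    have := two_rpow_mul_rpow_le_abs_rpow_sub_two_mul_sub (a := a) hp (le_of_lt hs)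
    rw [mul_assoc p (|s| ^ (p - 2)) s,
      abs_rpow_sub_two_mul_self_of_nonneg (by linarith) (le_of_lt hs)]
    nlinarith
  have := hmono (Set.mem_Ici.2 le_rfl) ht ht
  simp [f, zero_rpow (by positivity : p ≠ 0)] at this
  linarith

lemma abs_rpow_add_mul_add_le_abs_add_rpow {p : ℝ} (hp : 2 ≤ p) (a t : ℝ) :
    |a| ^ p + p * (|a| ^ (p - 2) * a) * t + 2 ^ (2 - p) * |t| ^ p ≤ |a + t| ^ p := by
  rcases le_total 0 t with ht | ht
  · exact abs_rpow_add_mul_add_le_abs_add_rpow_of_nonneg hp ht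
  · have := abs_rpow_add_mul_add_le_abs_add_rpow_of_nonneg (a := -a) hp (neg_nonneg.2 ht)
    rw [abs_neg, abs_neg, ← neg_add, abs_neg] at this
    convert this using 3
    ring

end Real

namespace MeasureTheory.MemLp

variable {Ω : Type*} [MeasurableSpace Ω] {P : Measure Ω} {p : ℝ} {f : Ω → ℝ}

lemma integrable_abs_rpow_s8 (hp : 0 < p) (hf : MemLp f (.ofReal p) P) :
    Integrable (fun ω ↦ |f ω| ^ p) P := by
  simpa [toReal_ofReal hp.le] using hf.integrable_norm_rpow (by simpa using hp) ofReal_ne_top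

lemma toReal_eLpNorm_rpow (hp : 0 < p) (hf : MemLp f (.ofReal p) P) :
    (eLpNorm f (.ofReal p) P).toReal ^ p = ∫ ω, |f ω| ^ p ∂P := by
  rw [hf.eLpNorm_eq_integral_rpow_norm (by simpa using hp) ofReal_ne_top,
    toReal_ofReal (by positivity), ← Real.rpow_mul (integral_nonneg fun _ ↦ by positivity)]
  simp [toReal_ofReal hp.le, hp.ne']

end MeasureTheory.MemLp

namespace ProbabilityTheory

variable {Ω : Type*} [MeasurableSpace Ω] {P : Measure Ω} {p : ℝ}

lemma integral_abs_rpow_add_le [IsFiniteMeasure P] {X Y : Ω → ℝ} (hp : 2 ≤ p)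
    (hX : MemLp X (.ofReal p) P) (hY : MemLp Y (.ofReal p) P) (hXY : IndepFun X Y P)
    (hY0 : ∫ ω, Y ω ∂P = 0) :
    ∫ ω, |X ω| ^ p ∂P + 2 ^ (2 - p) * ∫ ω, |Y ω| ^ p ∂P ≤ ∫ ω, |X ω + Y ω| ^ p ∂P := by
  set ψ : ℝ → ℝ := fun x ↦ |x| ^ (p - 2) * x
  have hψ : Measurable ψ :=
    ((continuous_abs.rpow_const fun _ ↦ .inr (by linarith)).mul continuous_id).measurable
  have hψX : Integrable (fun ω ↦ ψ (X ω)) P := by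
    refine ((hX.mono_exponent (ofReal_le_ofReal (by linarith : p - 1 ≤ p))).integrable_abs_rpow_s8
      (by linarith)).mono' (hψ.comp_aemeasurable hX.1.aemeasurable).aestronglyMeasurable
      (.of_forall fun ω ↦ le_of_eq ?_)
    have h := Real.abs_rpow_sub_two_mul_self_of_nonneg (p := p) (by linarith) (abs_nonneg (X ω))
    rw [abs_abs] at h
    rw [Real.norm_eq_abs, abs_mul, abs_of_nonneg (by positivity), h]
  have hYint : Integrable Y P := hY.integrable (by simp; linarith)
  have hψXY : IndepFun (fun ω ↦ ψ (X ω)) Y P := hXY.comp hψ measurable_id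
  have hcross : ∫ ω, ψ (X ω) * Y ω ∂P = 0 := by
    rw [hψXY.integral_fun_mul_eq_mul_integral hψX.1 hYint.1, hY0, mul_zero]
  have hXint := hX.integrable_abs_rpow_s8 (by linarith)
  have hψXYint : Integrable (fun ω ↦ p * (ψ (X ω) * Y ω)) P :=
    (hψXY.integrable_mul hψX hYint).const_mul p
  have hYint' : Integrable (fun ω ↦ 2 ^ (2 - p) * |Y ω| ^ p) P :=
    (hY.integrable_abs_rpow_s8 (by linarith)).const_mul _
  have hXψint : Integrable (fun ω ↦ |X ω| ^ p + p * (ψ (X ω) * Y ω)) P := hXint.add hψXYint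
  calc ∫ ω, |X ω| ^ p ∂P + 2 ^ (2 - p) * ∫ ω, |Y ω| ^ p ∂P
      = ∫ ω, |X ω| ^ p + p * (ψ (X ω) * Y ω) + 2 ^ (2 - p) * |Y ω| ^ p ∂P := by
        rw [integral_add hXψint hYint', integral_add hXint hψXYint,
          integral_const_mul, integral_const_mul, hcross, mul_zero, add_zero]
    _ ≤ ∫ ω, |X ω + Y ω| ^ p ∂P :=
        integral_mono (hXψint.add hYint')
          ((hX.add hY).integrable_abs_rpow_s8 (by linarith)) fun ω ↦
            (le_of_eq (by ring)).trans (Real.abs_rpow_add_mul_add_le_abs_add_rpow hp (X ω) (Y ω))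

lemma two_rpow_mul_sum_integral_abs_rpow_le [IsFiniteMeasure P] {ι : Type*} {X : ι → Ω → ℝ}
    (hp : 2 ≤ p) (hX : iIndepFun X P) (hXp : ∀ i, MemLp (X i) (.ofReal p) P)
    (hX0 : ∀ i, ∫ ω, X i ω ∂P = 0) (s : Finset ι) :
    2 ^ (2 - p) * ∑ i ∈ s, ∫ ω, |X i ω| ^ p ∂P ≤ ∫ ω, |∑ i ∈ s, X i ω| ^ p ∂P := by
  classical
  induction s using Finset.induction_on with
  | empty => simp [Real.zero_rpow (by linarith : p ≠ 0)]
  | insert i s hi ih =>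
    have hsum : MemLp (∑ j ∈ s, X j) (.ofReal p) P := memLp_finsetSum' s fun j _ ↦ hXp j
    have hstep := integral_abs_rpow_add_le hp hsum (hXp i)
      (hX.indepFun_finsetSum_of_notMem₀ (fun j ↦ (hXp j).1.aemeasurable) hi) (hX0 i)
    simp only [Finset.sum_apply] at hstep
    simp only [Finset.sum_insert hi, mul_add, add_comm (X i _)]
    linarith

lemma rpow_sum_toReal_eLpNorm_le [IsFiniteMeasure P] {ι : Type*} {X : ι → Ω → ℝ}
    (hp : 2 ≤ p) (hX : iIndepFun X P) (hXp : ∀ i, MemLp (X i) (.ofReal p) P)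
    (hX0 : ∀ i, ∫ ω, X i ω ∂P = 0) (s : Finset ι) :
    (∑ i ∈ s, (eLpNorm (X i) (.ofReal p) P).toReal ^ p) ^ (1 / p) ≤
      2 * (eLpNorm (fun ω ↦ ∑ i ∈ s, X i ω) (.ofReal p) P).toReal := by
  have hp0 : 0 < p := by linarith
  set S := (eLpNorm (fun ω ↦ ∑ i ∈ s, X i ω) (.ofReal p) P).toReal
  have hsum : ∑ i ∈ s, (eLpNorm (X i) (.ofReal p) P).toReal ^ p ≤ (2 * S) ^ p := by
    have hS : S ^ p = ∫ ω, |∑ i ∈ s, X i ω| ^ p ∂P :=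
      (memLp_finsetSum s fun j _ ↦ hXp j).toReal_eLpNorm_rpow hp0
    have h4 : (2 : ℝ) ^ p * 2 ^ (2 - p) = 4 := by
      rw [← Real.rpow_add two_pos]; norm_num
    have := two_rpow_mul_sum_integral_abs_rpow_le hp hX hXp hX0 s
    simp only [fun i ↦ (hXp i).toReal_eLpNorm_rpow hp0] at this ⊢
    rw [Real.mul_rpow zero_le_two (by positivity), hS]
    have : 0 ≤ ∑ i ∈ s, ∫ ω, |X i ω| ^ p ∂P :=
      Finset.sum_nonneg fun i _ ↦ integral_nonneg fun _ ↦ by positivity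
    nlinarith [Real.rpow_nonneg zero_le_two p]
  calc (∑ i ∈ s, (eLpNorm (X i) (.ofReal p) P).toReal ^ p) ^ (1 / p)
      ≤ ((2 * S) ^ p) ^ (1 / p) :=
        Real.rpow_le_rpow (Finset.sum_nonneg fun i _ ↦ by positivity) hsum (by positivity)
    _ = 2 * S := by
        rw [← Real.rpow_mul (by positivity), mul_one_div_cancel hp0.ne', Real.rpow_one]

end ProbabilityTheory

/-- Classical Rosenthal inequality, lower bound: for `2 ≤ p < ∞` there is a constant
`c_p` depending only on `p` such that for every finite sequence of independent
mean-zero random variables `(g_n)` in `L_p` on a probability space,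
`(Σ_n ‖g_n‖_2²)^{1/2} + (Σ_n ‖g_n‖_p^p)^{1/p} ≤ c_p ‖Σ_n g_n‖_p`. -/
theorem rosenthal_lower (p : ℝ) (hp : 2 ≤ p) :
    ∃ c : ℝ, 0 < c ∧
      ∀ (Ω : Type) (_ : MeasurableSpace Ω) (P : Measure Ω), IsProbabilityMeasure P →
      ∀ (N : ℕ) (g : Fin N → Ω → ℝ),
        iIndepFun g P →
        (∀ n, MemLp (g n) (ENNReal.ofReal p) P) →
        (∀ n, ∫ ω, g n ω ∂P = 0) →
        (∑ n, ((eLpNorm (g n) 2 P).toReal) ^ (2:ℝ)) ^ ((1:ℝ)/2) +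
            (∑ n, ((eLpNorm (g n) (ENNReal.ofReal p) P).toReal) ^ p) ^ (1/p) ≤
          c * (eLpNorm (fun ω => ∑ n, g n ω) (ENNReal.ofReal p) P).toReal := by
  refine ⟨4, by norm_num, fun Ω _ P _ N g hg hgp hg0 ↦ ?_⟩
  have hg2 : ∀ n, MemLp (g n) (.ofReal 2) P :=
    fun n ↦ (hgp n).mono_exponent (ofReal_le_ofReal hp)
  have hL2 := rpow_sum_toReal_eLpNorm_le le_rfl hg hg2 hg0 Finset.univ
  have hLp := rpow_sum_toReal_eLpNorm_le hp hg hgp hg0 Finset.univ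
  have hS : MemLp (fun ω ↦ ∑ n, g n ω) (.ofReal p) P := memLp_finsetSum _ fun n _ ↦ hgp n
  have hmono : (eLpNorm (fun ω ↦ ∑ n, g n ω) (.ofReal 2) P).toReal ≤
      (eLpNorm (fun ω ↦ ∑ n, g n ω) (.ofReal p) P).toReal :=
    toReal_mono hS.eLpNorm_ne_top (eLpNorm_le_eLpNorm_of_exponent_le (ofReal_le_ofReal hp) hS.1)
  rw [ofReal_ofNat] at hL2 hmono
  linarith
end

section
/- (Boundedness from bilinear domination) Let E be a symmetric Banach function space with E ∈ Int(L_p, L_q), 1 < p ≤ q < 2, over a finite von Neumann algebra (M, τ). Let z ∈ E^×(M), and let α ∈ (E^×)^{(1/(1−θ))}(M), β ∈ (E^×)^{(1/θ))}(M) be positive with support projections q_α, q_β. If |τ(z* v w)| ≤ ‖α v‖_2 ‖w β‖_2 for all v ∈ E_{1−θ}(M), w ∈ E_θ(M), then z = α y β for some y ∈ M with ‖y‖_∞ ≤ 1; in particular z* = q_β z* q_α. -/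
open MeasureTheory Set ENNReal

noncomputable section

/-- Lebesgue measure restricted to the interval `(0,1]`. -/
def μ0 : Measure ℝ := volume.restrict (Set.Ioc (0:ℝ) 1)

/-- A (not necessarily complete) description of a Banach function space on `(0,1]`:
a membership predicate together with a norm. -/
structure BFS where
  Mem : (ℝ → ℝ) → Prop
  norm : (ℝ → ℝ) → ℝ

/-- Decreasing rearrangement of `|f|` on `(0,1]`. -/
def rearr (f : ℝ → ℝ) (t : ℝ) : ℝ :=
  sInf {s : ℝ | 0 ≤ s ∧ μ0 {x | s < |f x|} ≤ ENNReal.ofReal t}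

/-- `E` is a symmetric (rearrangement invariant) function space. -/
def BFS.Symmetric (E : BFS) : Prop :=
  ∀ f g : ℝ → ℝ, Measurable f → E.Mem g →
    (∀ t, rearr f t ≤ rearr g t) → E.Mem f ∧ E.norm f ≤ E.norm g

/-- The `r`-convexification `E^{(r)}` of `E`. -/
def BFS.convexify (E : BFS) (r : ℝ) : BFS where
  Mem f := E.Mem fun x => |f x| ^ r
  norm f := (E.norm fun x => |f x| ^ r) ^ (1 / r)

/-- The `r`-convexification with an extended-real exponent, interpreting `r = ∞` as `L_∞`. -/
def BFS.convexifyE (E : BFS) (r : ℝ≥0∞) : BFS :=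
  if r = ∞ then
    { Mem := fun f => ∃ c : ℝ, ∀ x ∈ Set.Ioc (0:ℝ) 1, |f x| ≤ c
      norm := fun f => sInf {c : ℝ | 0 ≤ c ∧ ∀ x ∈ Set.Ioc (0:ℝ) 1, |f x| ≤ c} }
  else E.convexify r.toReal

/-- The Köthe dual `E^×`. -/
def KotheDual (E : BFS) : BFS where
  Mem f := ∀ g, E.Mem g → Integrable (fun x => |f x * g x|) μ0
  norm f := sSup {c : ℝ | ∃ g, E.Mem g ∧ E.norm g ≤ 1 ∧ c = ∫ x, |f x * g x| ∂μ0}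

/-- `L_r(0,1]` as a Banach function space. -/
def LpBFS (r : ℝ≥0∞) : BFS where
  Mem f := MemLp f r μ0
  norm f := (eLpNorm f r μ0).toReal

/-- `E` is an interpolation space for the couple `(L_p, L_q)`:
`L_p ∩ L_q ⊆ E ⊆ L_p + L_q` and every operator bounded on both `L_p` and `L_q`
is bounded on `E`, with uniform constant. -/
def IsInterpolation (E : BFS) (p q : ℝ≥0∞) : Prop :=
  (∀ f, MemLp f p μ0 → MemLp f q μ0 → E.Mem f) ∧
  (∀ f, E.Mem f → ∃ g h, (∀ x, f x = g x + h x) ∧ MemLp g p μ0 ∧ MemLp h q μ0) ∧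
  ∃ C : ℝ, 0 < C ∧ ∀ (T : (ℝ → ℝ) →ₗ[ℝ] (ℝ → ℝ)) (Mp Mq : ℝ),
    (∀ f, MemLp f p μ0 →
      MemLp (T f) p μ0 ∧ eLpNorm (T f) p μ0 ≤ ENNReal.ofReal Mp * eLpNorm f p μ0) →
    (∀ f, MemLp f q μ0 →
      MemLp (T f) q μ0 ∧ eLpNorm (T f) q μ0 ≤ ENNReal.ofReal Mq * eLpNorm f q μ0) →
    ∀ f, E.Mem f → E.Mem (T f) ∧ E.norm (T f) ≤ C * max Mp Mq * E.norm f

/-- Pointwise product space `X ⊙ Y`. -/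
def prodSpace (X Y : BFS) : BFS where
  Mem h := ∃ f g, X.Mem f ∧ Y.Mem g ∧ ∀ x, h x = f x * g x
  norm h := sInf {c : ℝ |
    ∃ f g, X.Mem f ∧ Y.Mem g ∧ (∀ x, h x = f x * g x) ∧ c = X.norm f * Y.norm g}

/-- Equality of Banach function spaces (same elements, same norms). -/
def BFSEq (A B : BFS) : Prop := (∀ f, A.Mem f ↔ B.Mem f) ∧ ∀ f, A.norm f = B.norm f

end

noncomputable section

open Matrix
open scoped ComplexOrder

/-- Normalized trace on `n × n` complex matrices. -/
def nTr {n : ℕ} (A : Matrix (Fin n) (Fin n) ℂ) : ℂ := Matrix.trace A / n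

/-- The `L_2` norm with respect to the normalized trace. -/
def nL2 {n : ℕ} (A : Matrix (Fin n) (Fin n) ℂ) : ℝ := Real.sqrt ((nTr (Aᴴ * A)).re)

/-- `q` is the support projection of the positive matrix `α`. -/
def IsSupportProj {n : ℕ} (α q : Matrix (Fin n) (Fin n) ℂ) : Prop :=
  qᴴ = q ∧ q * q = q ∧ q * α = α ∧ ∀ x : Matrix (Fin n) (Fin n) ℂ, α * x = 0 → q * x = 0

/-!
Testing the domination on `v = (1 - P) a` with `α P = α` (and symmetrically on `w`) shows that
`z` lives on the supports of `α` and `β`. Hence `z = α y β` with `y = α⁺ z β⁺`, where `α⁺`, `β⁺`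
are pseudoinverses, and `y` is dominated by `|τ(y* v w)| ≤ ‖v‖₂ ‖w‖₂` because `α α⁺` and `β β⁺`
are orthogonal projections. Testing this on the rank-one matrices `v = (y x) e*`, `w = e x*`
with a unit vector `e` gives `‖y x‖² ≤ ‖y x‖ ‖x‖`, so `y` is a contraction.
-/

namespace Matrix

variable {ι 𝕜 : Type*} [Fintype ι] [DecidableEq ι] [RCLike 𝕜] {A : Matrix ι ι 𝕜}

lemma continuousOn_real_spectrum (A : Matrix ι ι 𝕜) (f : ℝ → ℝ) :
    ContinuousOn f (spectrum ℝ A) :=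
  A.finite_real_spectrum.continuousOn f

/-- The Moore–Penrose pseudoinverse of a Hermitian matrix: nonzero eigenvalues are inverted and,
as `0⁻¹ = 0`, the eigenvalue `0` is kept (the value at a non-Hermitian matrix is the junk `0`). -/
def hermitianPinv (A : Matrix ι ι 𝕜) : Matrix ι ι 𝕜 := cfc (·⁻¹ : ℝ → ℝ) A

lemma isSelfAdjoint_hermitianPinv (A : Matrix ι ι 𝕜) : IsSelfAdjoint A.hermitianPinv :=
  cfc_predicate _ A

lemma commute_hermitianPinv (hA : A.IsHermitian) : Commute A A.hermitianPinv := by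
  have := cfc_commute_cfc (fun x : ℝ => x) (·⁻¹ : ℝ → ℝ) A
  rwa [cfc_id' ℝ A hA.isSelfAdjoint] at this

lemma mul_hermitianPinv (hA : A.IsHermitian) :
    A * A.hermitianPinv = cfc (fun x : ℝ => x * x⁻¹) A := by
  conv_lhs => enter [1]; rw [← cfc_id' ℝ A hA.isSelfAdjoint]
  exact (cfc_mul _ _ A (continuousOn_real_spectrum A _)
    (continuousOn_real_spectrum A _)).symm

lemma mul_hermitianPinv_mul_self (hA : A.IsHermitian) : A * A.hermitianPinv * A = A := by
  calc A * A.hermitianPinv * A = cfc (fun x : ℝ => x * x⁻¹ * x) A := by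
        rw [cfc_mul _ _ A (continuousOn_real_spectrum A _) (continuousOn_real_spectrum A _),
          cfc_id' ℝ A hA.isSelfAdjoint, mul_hermitianPinv hA]
    _ = A := by
        rw [cfc_congr (g := fun x => x) fun x _ => by by_cases hx : x = 0 <;> simp [hx],
          cfc_id' ℝ A hA.isSelfAdjoint]

lemma isStarProjection_mul_hermitianPinv (hA : A.IsHermitian) :
    IsStarProjection (A * A.hermitianPinv) := by
  rw [mul_hermitianPinv hA]
  refine ⟨?_, cfc_predicate _ A⟩
  rw [IsIdempotentElem, ← cfc_mul _ _ A (continuousOn_real_spectrum A _)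
    (continuousOn_real_spectrum A _)]
  exact cfc_congr fun x _ => by by_cases hx : x = 0 <;> simp [hx]

lemma mul_mul_hermitianPinv (hA : A.IsHermitian) : A * (A * A.hermitianPinv) = A := by
  rw [(commute_hermitianPinv hA).eq, ← mul_assoc, mul_hermitianPinv_mul_self hA]

end Matrix

section NormalizedTrace

variable {n : ℕ}

lemma nTr_eq_zero_iff (A : Matrix (Fin n) (Fin n) ℂ) : nTr A = 0 ↔ A.trace = 0 := by
  rcases n.eq_zero_or_pos with rfl | hn
  · simp [nTr, trace]
  · simp [nTr, hn.ne']

lemma nTr_mul_comm (A B : Matrix (Fin n) (Fin n) ℂ) : nTr (A * B) = nTr (B * A) := by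
  rw [nTr, nTr, trace_mul_comm]

lemma nL2_nonneg (A : Matrix (Fin n) (Fin n) ℂ) : 0 ≤ nL2 A := Real.sqrt_nonneg _

lemma nL2_zero : nL2 (0 : Matrix (Fin n) (Fin n) ℂ) = 0 := by
  simp [nL2, nTr]

lemma nL2_conjTranspose (A : Matrix (Fin n) (Fin n) ℂ) : nL2 Aᴴ = nL2 A := by
  rw [nL2, nL2, conjTranspose_conjTranspose, nTr_mul_comm]

lemma nL2_le_nL2 {A B : Matrix (Fin n) (Fin n) ℂ} (h : (Aᴴ * A).trace ≤ (Bᴴ * B).trace) :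
    nL2 A ≤ nL2 B := by
  unfold nL2 nTr
  gcongr

lemma conjTranspose_mul_self_starProjection_mul {P : Matrix (Fin n) (Fin n) ℂ}
    (hP : IsStarProjection P) (A : Matrix (Fin n) (Fin n) ℂ) :
    (P * A)ᴴ * (P * A) = Aᴴ * P * A := by
  have hPH : Pᴴ = P := hP.isSelfAdjoint
  rw [conjTranspose_mul, hPH, mul_assoc, ← mul_assoc P, hP.isIdempotentElem.eq, mul_assoc]

lemma nL2_starProjection_mul_le {P : Matrix (Fin n) (Fin n) ℂ} (hP : IsStarProjection P)
    (A : Matrix (Fin n) (Fin n) ℂ) : nL2 (P * A) ≤ nL2 A := by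
  refine nL2_le_nL2 ?_
  have hsplit : Aᴴ * A = (P * A)ᴴ * (P * A) + ((1 - P) * A)ᴴ * ((1 - P) * A) := by
    rw [conjTranspose_mul_self_starProjection_mul hP,
      conjTranspose_mul_self_starProjection_mul hP.one_sub, mul_sub, sub_mul, mul_one, add_sub_cancel]
  rw [hsplit, trace_add]
  exact le_add_of_nonneg_right (posSemidef_conjTranspose_mul_self _).trace_nonneg

lemma nL2_mul_starProjection_le {P : Matrix (Fin n) (Fin n) ℂ} (hP : IsStarProjection P)
    (A : Matrix (Fin n) (Fin n) ℂ) : nL2 (A * P) ≤ nL2 A := by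
  have hPH : Pᴴ = P := hP.isSelfAdjoint
  calc nL2 (A * P) = nL2 (P * Aᴴ) := by rw [← nL2_conjTranspose, conjTranspose_mul, hPH]
    _ ≤ nL2 Aᴴ := nL2_starProjection_mul_le hP Aᴴ
    _ = nL2 A := nL2_conjTranspose A

lemma nL2_vecMulVec (u v : Fin n → ℂ) :
    nL2 (vecMulVec u (star v)) = √(((star u ⬝ᵥ u) * (star v ⬝ᵥ v)).re / n) := by
  rw [nL2, nTr, conjTranspose_vecMulVec, star_star, vecMulVec_mul_vecMulVec, trace_vecMulVec,
    dotProduct_smul, dotProduct_comm v, smul_eq_mul, Complex.div_natCast_re]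

end NormalizedTrace

def IsBilinDominated {n : ℕ} (z α β : Matrix (Fin n) (Fin n) ℂ) : Prop :=
  ∀ v w : Matrix (Fin n) (Fin n) ℂ, ‖nTr (zᴴ * (v * w))‖ ≤ nL2 (α * v) * nL2 (w * β)

namespace IsBilinDominated

variable {n : ℕ} {z α β P Q : Matrix (Fin n) (Fin n) ℂ}

lemma conjTranspose_mul_eq (h : IsBilinDominated z α β) (hP : α * P = α) : zᴴ * P = zᴴ := by
  have hvanish : zᴴ * (1 - P) = 0 := by
    refine ext_iff_trace_mul_right.mpr fun a => ?_
    have hαv : α * ((1 - P) * a) = 0 := by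
      rw [← mul_assoc, mul_sub, mul_one, hP, sub_self, zero_mul]
    have := h ((1 - P) * a) 1
    rw [Matrix.zero_mul, trace_zero]
    rwa [hαv, nL2_zero, zero_mul, norm_le_zero_iff, mul_one, nTr_eq_zero_iff, ← mul_assoc] at this
  rwa [mul_sub, mul_one, sub_eq_zero, eq_comm] at hvanish

lemma mul_conjTranspose_eq (h : IsBilinDominated z α β) (hP : P * β = β) : P * zᴴ = zᴴ := by
  have hvanish : (1 - P) * zᴴ = 0 := by
    refine ext_iff_trace_mul_left.mpr fun a => ?_
    have hwβ : a * (1 - P) * β = 0 := by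
      rw [mul_assoc, sub_mul, one_mul, hP, sub_self, mul_zero]
    have := h 1 (a * (1 - P))
    rw [Matrix.mul_zero, trace_zero]
    rwa [hwβ, nL2_zero, mul_zero, norm_le_zero_iff, one_mul, nTr_eq_zero_iff, trace_mul_comm,
      mul_assoc] at this
  rwa [sub_mul, one_mul, sub_eq_zero, eq_comm] at hvanish

lemma conjTranspose_eq (h : IsBilinDominated z α β)
    (hP : α * P = α) (hQ : Q * β = β) : zᴴ = Q * zᴴ * P := by
  rw [mul_assoc, h.conjTranspose_mul_eq hP, h.mul_conjTranspose_eq hQ]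

lemma eq_mul_mul (h : IsBilinDominated z α β) (hP : α * P = α)
    (hQ : Q * β = β) (hPH : Pᴴ = P) (hQH : Qᴴ = Q) : z = P * z * Q := by
  simpa only [conjTranspose_mul, conjTranspose_conjTranspose, hPH, hQH, mul_assoc] using
    congrArg conjTranspose (h.conjTranspose_eq hP hQ)


lemma hermitianPinv_mul_mul_hermitianPinv (h : IsBilinDominated z α β) (hα : α.IsHermitian)
    (hβ : β.IsHermitian) : IsBilinDominated (α.hermitianPinv * z * β.hermitianPinv) 1 1 := by
  intro v w
  set pα := α.hermitianPinv
  set pβ := β.hermitianPinv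
  have hpαH : pαᴴ = pα := α.isSelfAdjoint_hermitianPinv
  have hpβH : pβᴴ = pβ := β.isSelfAdjoint_hermitianPinv
  calc ‖nTr ((pα * z * pβ)ᴴ * (v * w))‖ = ‖nTr (zᴴ * (pα * v * (w * pβ)))‖ := by
        rw [conjTranspose_mul, conjTranspose_mul, hpαH, hpβH, mul_assoc, mul_assoc,
          nTr_mul_comm]
        simp only [mul_assoc]
    _ ≤ nL2 (α * (pα * v)) * nL2 (w * pβ * β) := h _ _
    _ ≤ nL2 (1 * v) * nL2 (w * 1) := by
        rw [one_mul, mul_one, ← mul_assoc, mul_assoc w, ← (commute_hermitianPinv hβ).eq]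
        exact mul_le_mul (nL2_starProjection_mul_le (isStarProjection_mul_hermitianPinv hα) v)
          (nL2_mul_starProjection_le (isStarProjection_mul_hermitianPinv hβ) w) (nL2_nonneg _)
          (nL2_nonneg _)

lemma posSemidef_one_sub_conjTranspose_mul_self {y : Matrix (Fin n) (Fin n) ℂ}
    (h : IsBilinDominated y 1 1) : (1 - yᴴ * y).PosSemidef := by
  refine .of_dotProduct_mulVec_nonneg (isHermitian_one.sub (isHermitian_conjTranspose_mul_self y))
    fun x => ?_
  obtain hempty | ⟨⟨i⟩⟩ := isEmpty_or_nonempty (Fin n)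
  · simp [dotProduct]
  set a := star (y *ᵥ x) ⬝ᵥ (y *ᵥ x)
  set b := star x ⬝ᵥ x
  have ha : 0 ≤ a := dotProduct_star_self_nonneg _
  have hb : 0 ≤ b := dotProduct_star_self_nonneg _
  set e : Fin n → ℂ := Pi.single i 1
  have he : star e ⬝ᵥ e = 1 := by simp [e, dotProduct, Pi.single_apply]
  have hn : (0 : ℝ) < n := by exact_mod_cast Fin.pos i
  have hbound := h (vecMulVec (y *ᵥ x) (star e)) (vecMulVec e (star x))
  have htrace : nTr (yᴴ * (vecMulVec (y *ᵥ x) (star e) * vecMulVec e (star x))) = a / n := by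
    rw [vecMulVec_mul_vecMulVec, he, one_smul, mul_vecMulVec, nTr, trace_vecMulVec,
      dotProduct_comm, dotProduct_mulVec, ← star_mulVec]
  rw [htrace, one_mul, mul_one, nL2_vecMulVec, nL2_vecMulVec, he, mul_one, one_mul,
    norm_div, Complex.norm_natCast, ← Complex.re_eq_norm.mpr ha] at hbound
  have hre : a.re / n ≤ b.re / n := by
    have hs : 0 ≤ a.re / n := div_nonneg (Complex.nonneg_iff.mp ha).1 hn.le
    have ht : 0 ≤ b.re / n := div_nonneg (Complex.nonneg_iff.mp hb).1 hn.le
    nlinarith [Real.sq_sqrt hs, Real.sq_sqrt ht, Real.sqrt_nonneg (a.re / n),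
      Real.sqrt_nonneg (b.re / n)]
  have hab : a ≤ b := Complex.le_def.mpr
    ⟨(div_le_div_iff_of_pos_right hn).mp hre,
      (Complex.nonneg_iff.mp ha).2.symm.trans (Complex.nonneg_iff.mp hb).2⟩
  rw [sub_mulVec, one_mulVec, dotProduct_sub, ← mulVec_mulVec, dotProduct_mulVec,
    ← star_mulVec]
  exact sub_nonneg.mpr hab

end IsBilinDominated

theorem bounded_from_bilinear_domination_general
    (n : ℕ)
    (z α β qα qβ : Matrix (Fin n) (Fin n) ℂ)
    (hα : α.PosSemidef) (hβ : β.PosSemidef)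
    (hqα : IsSupportProj α qα) (hqβ : IsSupportProj β qβ)
    (hdom : ∀ v w : Matrix (Fin n) (Fin n) ℂ,
      ‖nTr (zᴴ * (v * w))‖ ≤ nL2 (α * v) * nL2 (w * β)) :
    (∃ y : Matrix (Fin n) (Fin n) ℂ, (1 - yᴴ * y).PosSemidef ∧ z = α * y * β) ∧
    zᴴ = qβ * zᴴ * qα := by
  have h : IsBilinDominated z α β := hdom
  have hαqα : α * qα = α := by
    simpa only [conjTranspose_mul, hqα.1, hα.1.eq] using congrArg conjTranspose hqα.2.2.1
  refine ⟨⟨α.hermitianPinv * z * β.hermitianPinv, (h.hermitianPinv_mul_mul_hermitianPinv hα.1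
    hβ.1).posSemidef_one_sub_conjTranspose_mul_self, ?_⟩, h.conjTranspose_eq hαqα hqβ.2.2.1⟩
  have hPα : (α * α.hermitianPinv)ᴴ = α * α.hermitianPinv :=
    (isStarProjection_mul_hermitianPinv hα.1).isSelfAdjoint
  have hPβ : (β * β.hermitianPinv)ᴴ = β * β.hermitianPinv :=
    (isStarProjection_mul_hermitianPinv hβ.1).isSelfAdjoint
  have hz := h.eq_mul_mul (mul_mul_hermitianPinv hα.1) (mul_hermitianPinv_mul_self hβ.1) hPα hPβ
  rw [(commute_hermitianPinv hβ.1).eq] at hz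
  simpa only [mul_assoc] using hz

/-- Boundedness from bilinear domination (matrix-algebra model with normalized
trace): let `E` be a symmetric Banach function space with `E ∈ Int(L_p, L_q)`,
`1 < p ≤ q < 2`, and `0 ≤ θ ≤ 1`. Let `z` and positive `α`, `β` with support
projections `q_α`, `q_β` be given. If `|τ(z^* v w)| ≤ ‖α v‖_2 ‖w β‖_2` for all
`v`, `w`, then `z = α y β` for some contraction `y` (i.e. `y^*y ≤ 1`); in
particular `z^* = q_β z^* q_α`. -/
theorem bounded_from_bilinear_domination
    (E : BFS) (hE : E.Symmetric)
    (p q : ℝ) (hp : 1 < p) (hpq : p ≤ q) (hq : q < 2)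
    (hInt : IsInterpolation E (ENNReal.ofReal p) (ENNReal.ofReal q))
    (θ : ℝ) (hθ0 : 0 ≤ θ) (hθ1 : θ ≤ 1)
    (n : ℕ) (hn : 0 < n)
    (z α β qα qβ : Matrix (Fin n) (Fin n) ℂ)
    (hα : α.PosSemidef) (hβ : β.PosSemidef)
    (hqα : IsSupportProj α qα) (hqβ : IsSupportProj β qβ)
    (hdom : ∀ v w : Matrix (Fin n) (Fin n) ℂ,
      ‖nTr (zᴴ * (v * w))‖ ≤ nL2 (α * v) * nL2 (w * β)) :
    (∃ y : Matrix (Fin n) (Fin n) ℂ, (1 - yᴴ * y).PosSemidef ∧ z = α * y * β) ∧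
    zᴴ = qβ * zᴴ * qα :=
  bounded_from_bilinear_domination_general n z α β qα qβ hα hβ hqα hqβ hdom

end
end
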